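/- arXiv:1112.1548 — 2 statements merged into one kernel-verified Lean document; each statement's English description precedes it below -/
import Mathlib

section
/- Let c > 0 be a real number. Suppose that the edges of the complete graph on n vertices have been 2-colored in red and blue and that each vertex v has been assigned positive real weights r_v and b_v satisfying: b_v ≥ c·ln(4c/r_v) whenever r_v ≤ b_v, and r_v ≥ c·ln(4c/b_v) whenever b_v ≤ r_v. Then there exists either a red clique K with ∑_{v ∈ K} r_v ≥ (c/2)·ln n or a blue clique L with ∑_{v ∈ L} b_v ≥ (c/2)·ln n. -/
/-!
Put `α v = exp (r v / c₀)` and `β v = exp (b v / c₀)`. The logarithmic hypothesis on the weights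
says exactly enough to give `α v⁻¹ + β v⁻¹ ≤ 1` at every vertex. With such weights an
Erdős–Szekeres style induction works: for a vertex `v` of `S` with red and blue neighbourhoods
`R` and `B`, we have `|S| + 1 = (|R| + 1) + (|B| + 1)`, so `|S| + 1 ≤ α v (|R| + 1)` or
`|S| + 1 ≤ β v (|B| + 1)`; recursing into that neighbourhood yields a red clique `K` and a blue
clique `L` with `(∏_K α) (∏_L β) ≥ n + 1`. Taking logarithms, `∑_K r + ∑_L b ≥ c₀ ln n`, so one of
the two sums is at least `(c₀ / 2) ln n`.
-/

open Real Finset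

lemma exp_neg_add_exp_neg_le_one {t s : ℝ} (ht : 0 < t) (hts : t ≤ s) (h : log (4 / t) ≤ s) :
    exp (-t) + exp (-s) ≤ 1 := by
  have hs : exp (-s) ≤ exp (-t) := exp_le_exp.2 (neg_le_neg hts)
  rcases le_or_gt t 3 with ht3 | ht3
  · have h1 : exp (-t) ≤ (1 + t)⁻¹ := by
      rw [exp_neg]; exact inv_anti₀ (by positivity) (by linarith [add_one_le_exp t])
    have h2 : exp (-s) ≤ t / 4 := by
      rw [exp_neg, ← inv_div]
      exact inv_anti₀ (by positivity) ((log_le_iff_le_exp (by positivity)).1 h)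
    have h3 : (1 + t)⁻¹ + t / 4 ≤ 1 := by
      rw [← sub_nonneg]
      have : 1 - ((1 + t)⁻¹ + t / 4) = t * (3 - t) / (4 * (1 + t)) := by field_simp; ring
      rw [this]; exact div_nonneg (mul_nonneg ht.le (by linarith)) (by positivity)
    linarith
  · have : exp (-t) ≤ 1 / 2 := by
      rw [exp_neg, one_div]; exact inv_anti₀ (by norm_num) (by linarith [add_one_le_exp t])
    linarith

lemma exp_neg_div_add_exp_neg_div_le_one {c x y : ℝ} (hc : 0 < c) (hx : 0 < x) (hxy : x ≤ y)
    (h : c * log (4 * c / x) ≤ y) : exp (-(x / c)) + exp (-(y / c)) ≤ 1 := by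
  refine exp_neg_add_exp_neg_le_one (by positivity) (by gcongr) ?_
  rwa [div_div_eq_mul_div, le_div_iff₀' hc]

lemma le_mul_or_le_mul_of_inv_add_inv_le_one {a b x y : ℝ} (ha : 0 < a) (hb : 0 < b)
    (hab : a⁻¹ + b⁻¹ ≤ 1) (hx : 0 ≤ x) (hy : 0 ≤ y) : x + y ≤ a * x ∨ x + y ≤ b * y := by
  by_contra! h
  have hx' : x < (x + y) * a⁻¹ := by rw [← div_eq_mul_inv, lt_div_iff₀ ha, mul_comm]; exact h.1
  have hy' : y < (x + y) * b⁻¹ := by rw [← div_eq_mul_inv, lt_div_iff₀ hb, mul_comm]; exact h.2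
  nlinarith [mul_le_mul_of_nonneg_left hab (add_nonneg hx hy)]

section Coloring

variable {V : Type*} [LinearOrder V]

def edgeColor (c : V → V → Bool) (u v : V) : Bool := if u < v then c u v else c v u

def IsMonoClique (c : V → V → Bool) (col : Bool) (K : Finset V) : Prop :=
  ∀ i ∈ K, ∀ j ∈ K, i < j → c i j = col

def colorNbhd (c : V → V → Bool) (col : Bool) (v : V) (S : Finset V) : Finset V :=
  (S.erase v).filter fun u => edgeColor c u v = col

lemma IsMonoClique.insert {c : V → V → Bool} {col : Bool} {K : Finset V} {v : V}
    (hK : IsMonoClique c col K) (hv : ∀ u ∈ K, edgeColor c u v = col) :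
    IsMonoClique c col (insert v K) := by
  intro i hi j hj hij
  rcases mem_insert.1 hi with rfl | hiK <;> rcases mem_insert.1 hj with rfl | hjK
  · exact absurd hij (lt_irrefl _)
  · simpa [edgeColor, not_lt_of_gt hij] using hv j hjK
  · simpa [edgeColor, hij] using hv i hiK
  · exact hK i hiK j hjK hij

lemma card_colorNbhd_add_card_colorNbhd (c : V → V → Bool) {v : V} {S : Finset V} (hv : v ∈ S) :
    #(colorNbhd c true v S) + #(colorNbhd c false v S) + 1 = #S := by
  simp only [colorNbhd, ← Bool.not_eq_true, card_filter_add_card_filter_not, card_erase_add_one hv]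

lemma colorNbhd_ssubset (c : V → V → Bool) (col : Bool) {v : V} {S : Finset V} (hv : v ∈ S) :
    colorNbhd c col v S ⊂ S :=
  (filter_subset _ _).trans_ssubset (erase_ssubset hv)

lemma notMem_colorNbhd (c : V → V → Bool) (col : Bool) (v : V) (S : Finset V) :
    v ∉ colorNbhd c col v S := by
  simp [colorNbhd]

lemma edgeColor_of_mem_colorNbhd {c : V → V → Bool} {col : Bool} {u v : V} {S : Finset V}
    (hu : u ∈ colorNbhd c col v S) : edgeColor c u v = col :=
  (mem_filter.1 hu).2

theorem exists_isMonoClique_card_add_one_le_prod (c : V → V → Bool) (α β : V → ℝ)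
    (hα : ∀ v, 0 < α v) (hβ : ∀ v, 0 < β v) (hαβ : ∀ v, (α v)⁻¹ + (β v)⁻¹ ≤ 1)
    (S : Finset V) :
    ∃ K ⊆ S, ∃ L ⊆ S, IsMonoClique c true K ∧ IsMonoClique c false L ∧
      (#S + 1 : ℝ) ≤ (∏ v ∈ K, α v) * ∏ v ∈ L, β v := by
  induction S using Finset.strongInduction with
  | _ S ih =>
    obtain rfl | ⟨v, hv⟩ := S.eq_empty_or_nonempty
    · exact ⟨∅, subset_rfl, ∅, subset_rfl, by simp [IsMonoClique], by simp [IsMonoClique], by simp⟩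
    set R := colorNbhd c true v S
    set B := colorNbhd c false v S
    have hcard : (#S + 1 : ℝ) = (#R + 1) + (#B + 1) := by
      rw [← card_colorNbhd_add_card_colorNbhd c hv]; push_cast; ring
    rcases le_mul_or_le_mul_of_inv_add_inv_le_one (hα v) (hβ v) (hαβ v)
      (x := #R + 1) (y := #B + 1) (by positivity) (by positivity) with hR | hB
    · obtain ⟨K, hKR, L, hLR, hK, hL, hprod⟩ := ih R (colorNbhd_ssubset c true hv)
      have hRS := (colorNbhd_ssubset c true hv).subset
      refine ⟨insert v K, insert_subset hv (hKR.trans hRS), L, hLR.trans hRS,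
        hK.insert fun u hu => edgeColor_of_mem_colorNbhd (hKR hu), hL, ?_⟩
      rw [prod_insert fun h => notMem_colorNbhd c true v S (hKR h), mul_assoc, hcard]
      exact hR.trans (mul_le_mul_of_nonneg_left hprod (hα v).le)
    · obtain ⟨K, hKB, L, hLB, hK, hL, hprod⟩ := ih B (colorNbhd_ssubset c false hv)
      have hBS := (colorNbhd_ssubset c false hv).subset
      refine ⟨K, hKB.trans hBS, insert v L, insert_subset hv (hLB.trans hBS),
        hK, hL.insert fun u hu => edgeColor_of_mem_colorNbhd (hLB hu), ?_⟩
      rw [prod_insert fun h => notMem_colorNbhd c false v S (hLB h), mul_left_comm, hcard]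
      exact hB.trans (mul_le_mul_of_nonneg_left hprod (hβ v).le)

end Coloring

/-- Weighted Ramsey theorem, scaled version, Lemma 3.3.
Let `c₀ > 0`. If the edges of `K_n` are 2-colored and each vertex `v` carries positive
weights `r v`, `b v` with `b v ≥ c₀ ln (4c₀ / r v)` whenever `r v ≤ b v` and
`r v ≥ c₀ ln (4c₀ / b v)` whenever `b v ≤ r v`, then there is a red clique `K` with
`∑_{v ∈ K} r v ≥ (c₀/2) ln n` or a blue clique `L` with `∑_{v ∈ L} b v ≥ (c₀/2) ln n`. -/
theorem weighted_ramsey_scaled (c₀ : ℝ) (hc₀ : 0 < c₀)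
    (n : ℕ) (c : Fin n → Fin n → Bool)
    (r b : Fin n → ℝ) (hr : ∀ v, 0 < r v) (hb : ∀ v, 0 < b v)
    (hrb : ∀ v, r v ≤ b v → c₀ * Real.log (4 * c₀ / r v) ≤ b v)
    (hbr : ∀ v, b v ≤ r v → c₀ * Real.log (4 * c₀ / b v) ≤ r v) :
    (∃ K : Finset (Fin n), (∀ i ∈ K, ∀ j ∈ K, i < j → c i j = true) ∧
      (c₀ / 2) * Real.log n ≤ ∑ v ∈ K, r v) ∨
    (∃ L : Finset (Fin n), (∀ i ∈ L, ∀ j ∈ L, i < j → c i j = false) ∧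
      (c₀ / 2) * Real.log n ≤ ∑ v ∈ L, b v) := by
  have hweights : ∀ v, (exp (r v / c₀))⁻¹ + (exp (b v / c₀))⁻¹ ≤ 1 := by
    intro v
    rw [← exp_neg, ← exp_neg]
    rcases le_total (r v) (b v) with h | h
    · exact exp_neg_div_add_exp_neg_div_le_one hc₀ (hr v) h (hrb v h)
    · rw [add_comm]
      exact exp_neg_div_add_exp_neg_div_le_one hc₀ (hb v) h (hbr v h)
  obtain ⟨K, -, L, -, hK, hL, hprod⟩ := exists_isMonoClique_card_add_one_le_prod c _ _
    (fun _ => exp_pos _) (fun _ => exp_pos _) hweights univ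
  rw [card_univ, Fintype.card_fin, ← exp_sum, ← exp_sum, ← exp_add, ← sum_div, ← sum_div,
    ← add_div, ← log_le_iff_le_exp (by positivity), le_div_iff₀' hc₀] at hprod
  have hlog : log n ≤ log (n + 1) := by
    rcases n.eq_zero_or_pos with rfl | hn
    · simp
    · exact log_le_log (by positivity) (by linarith)
  have hsum : c₀ * log n ≤ ∑ v ∈ K, r v + ∑ v ∈ L, b v :=
    (mul_le_mul_of_nonneg_left hlog hc₀.le).trans hprod
  rcases le_or_gt (c₀ / 2 * log n) (∑ v ∈ K, r v) with hKr | hKr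
  · exact Or.inl ⟨K, hK, hKr⟩
  · exact Or.inr ⟨L, hL, by linarith⟩
end

section
/- For every real ε > 0 there exists a constant C = C(ε) > 0 such that for every natural number n ≥ 2 there is a 2-coloring of the edges of the complete graph on the vertex set {2, 3, ..., n} in which every monochromatic clique S satisfies ∑_{s ∈ S} 1/(log₂ s)^(1+ε) ≤ C. -/
/-!
Split `{2, …, n}` into the blocks `2 ^ 2 ^ k ≤ s < 2 ^ 2 ^ (k + 1)`. Inside block `k` use an
Erdős colouring of `2 ^ 2 ^ (k + 1)` vertices without monochromatic cliques of size `2 ^ (k + 3)`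
(it exists by a union bound over all colourings), and give every edge between two blocks one
fixed colour. A monochromatic clique then meets block `k` in fewer than `2 ^ (k + 3)` vertices,
each of weight at most `2 ^ (-k (1 + ε))`, so its total weight is at most
`∑ₖ 8 · 2 ^ (-ε k) = 8 / (1 - 2 ^ (-ε))`.
-/

open Finset Real
open Fintype (card)

section Coloring

variable {α ι κ : Type*}

def IsMonochromatic [LT α] (c : α → α → κ) (S : Finset α) : Prop :=
  ∃ clr, ∀ i ∈ S, ∀ j ∈ S, i < j → c i j = clr

instance [LT α] [DecidableLT α] [Fintype κ] [DecidableEq κ] (c : α → α → κ) (S : Finset α) :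
    Decidable (IsMonochromatic c S) :=
  inferInstanceAs (Decidable (∃ clr, ∀ i ∈ S, ∀ j ∈ S, i < j → c i j = clr))

theorem IsMonochromatic.subset [LT α] {c : α → α → κ} {S T : Finset α}
    (h : IsMonochromatic c S) (hTS : T ⊆ S) : IsMonochromatic c T :=
  let ⟨clr, hclr⟩ := h
  ⟨clr, fun i hi j hj => hclr i (hTS hi) j (hTS hj)⟩

theorem card_filter_forall_mem_eq_mul_pow_le [Fintype α] [DecidableEq α] [Fintype κ]
    [DecidableEq κ] (P : Finset (α × α)) (v : κ) :
    #{c : α → α → κ | ∀ p ∈ P, c p.1 p.2 = v} * card κ ^ #P ≤ card κ ^ (card α * card α) := by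
  have hinj : #{c : α → α → κ | ∀ p ∈ P, c p.1 p.2 = v} ≤ card ({p // p ∉ P} → κ) := by
    refine card_le_card_of_injOn (t := univ) (fun c p => c p.1.1 p.1.2)
      (fun _ _ => mem_coe.2 (mem_univ _)) fun c hc c' hc' hcc' => ?_
    simp only [coe_filter, mem_univ, true_and, Set.mem_ofPred_eq] at hc hc'
    funext i j
    by_cases hij : (i, j) ∈ P
    · rw [hc _ hij, hc' _ hij]
    · exact congrFun hcc' ⟨(i, j), hij⟩
  have hP : #P ≤ card α * card α := by simpa using card_le_univ P
  calc #{c : α → α → κ | ∀ p ∈ P, c p.1 p.2 = v} * card κ ^ #P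
      ≤ card κ ^ (card α * card α - #P) * card κ ^ #P := by
        rw [Fintype.card_fun, Fintype.card_subtype_compl, Fintype.card_coe,
          Fintype.card_prod] at hinj
        gcongr
    _ = card κ ^ (card α * card α) := pow_sub_mul_pow _ hP

theorem card_isMonochromatic_mul_pow_le [Fintype α] [LinearOrder α] [Fintype κ] [DecidableEq κ]
    (T : Finset α) :
    #{c : α → α → κ | IsMonochromatic c T} * card κ ^ (#T).choose 2
      ≤ card κ * card κ ^ (card α * card α) := by
  set P : Finset (α × α) := {p ∈ T ×ˢ T | p.1 < p.2}
  have hcover : ({c : α → α → κ | IsMonochromatic c T} : Finset _)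
      ⊆ univ.biUnion fun v => {c : α → α → κ | ∀ p ∈ P, c p.1 p.2 = v} := by
    intro c hc
    obtain ⟨v, hv⟩ := (mem_filter.1 hc).2
    simp only [mem_biUnion, mem_univ, mem_filter, true_and]
    refine ⟨v, fun p hp => ?_⟩
    obtain ⟨hpT, hlt⟩ := mem_filter.1 hp
    exact hv _ (mem_product.1 hpT).1 _ (mem_product.1 hpT).2 hlt
  rw [← card_product_filter_lt]
  calc #{c : α → α → κ | IsMonochromatic c T} * card κ ^ #P
      ≤ (∑ v : κ, #{c : α → α → κ | ∀ p ∈ P, c p.1 p.2 = v}) * card κ ^ #P := by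
        gcongr
        exact (card_le_card hcover).trans card_biUnion_le
    _ ≤ ∑ _v : κ, card κ ^ (card α * card α) := by
        rw [sum_mul]
        exact sum_le_sum fun v _ => card_filter_forall_mem_eq_mul_pow_le P v
    _ = card κ * card κ ^ (card α * card α) := by simp

theorem exists_coloring_forall_isMonochromatic_card_lt [Fintype α] [LinearOrder α] [Fintype κ]
    [Nonempty κ] {t : ℕ} (h : (card α).choose t * card κ < card κ ^ t.choose 2) :
    ∃ c : α → α → κ, ∀ S, IsMonochromatic c S → #S < t := by
  classical
  by_contra! hbad
  have hcover : (univ : Finset (α → α → κ))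
      ⊆ (powersetCard t univ).biUnion fun T => {c | IsMonochromatic c T} := by
    intro c _
    obtain ⟨S, hS, htS⟩ := hbad c
    obtain ⟨T, hTS, hT⟩ := exists_subset_card_eq htS
    simp only [mem_biUnion, mem_powersetCard, subset_univ, true_and, mem_filter, mem_univ]
    exact ⟨T, hT, hS.subset hTS⟩
  have hpos : 0 < card κ ^ (card α * card α) := pow_pos Fintype.card_pos _
  have hlt : card κ ^ (card α * card α) * card κ ^ t.choose 2
      < card κ ^ (card α * card α) * card κ ^ t.choose 2 :=
    calc card κ ^ (card α * card α) * card κ ^ t.choose 2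
        = #(univ : Finset (α → α → κ)) * card κ ^ t.choose 2 := by
          rw [card_univ, Fintype.card_fun, Fintype.card_fun, ← pow_mul]
      _ ≤ ∑ T ∈ powersetCard t univ,
            #{c : α → α → κ | IsMonochromatic c T} * card κ ^ t.choose 2 := by
          rw [← sum_mul]
          gcongr
          exact (card_le_card hcover).trans card_biUnion_le
      _ ≤ ∑ _T ∈ powersetCard t (univ : Finset α), card κ * card κ ^ (card α * card α) := by
          refine sum_le_sum fun T hT => ?_
          rw [← (mem_powersetCard.1 hT).2]
          exact card_isMonochromatic_mul_pow_le T
      _ = (card α).choose t * card κ * card κ ^ (card α * card α) := by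
          rw [sum_const, card_powersetCard, card_univ, smul_eq_mul, mul_assoc]
      _ < card κ ^ (card α * card α) * card κ ^ t.choose 2 := by
          rw [mul_comm (card κ ^ _)]
          exact Nat.mul_lt_mul_of_pos_right h hpos
  exact lt_irrefl _ hlt

theorem exists_coloring_forall_subset_isMonochromatic_card_lt [LinearOrder α] [Fintype κ]
    [Nonempty κ] (V : Finset α) {t : ℕ} (h : (#V).choose t * card κ < card κ ^ t.choose 2) :
    ∃ c : α → α → κ, ∀ S ⊆ V, IsMonochromatic c S → #S < t := by
  obtain ⟨c, hc⟩ := exists_coloring_forall_isMonochromatic_card_lt (α := V) (by simpa using h)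
  refine ⟨fun i j => if hij : i ∈ V ∧ j ∈ V then c ⟨i, hij.1⟩ ⟨j, hij.2⟩
    else Classical.arbitrary κ, fun S hSV ⟨clr, hclr⟩ => ?_⟩
  have hS : #(S.subtype (· ∈ V)) = #S := by
    rw [card_subtype, filter_true_of_mem hSV]
  refine hS ▸ hc _ ⟨clr, fun i hi j hj hij => ?_⟩
  simpa using hclr i (mem_subtype.1 hi) j (mem_subtype.1 hj) hij

def blockwise [DecidableEq ι] (b : α → ι) (F : ι → α → α → κ) (k₀ : κ) : α → α → κ :=
  fun i j => if b i = b j then F (b i) i j else k₀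

theorem IsMonochromatic.filter_of_blockwise [LT α] [DecidableEq ι] {b : α → ι}
    {F : ι → α → α → κ} {k₀ : κ} {S : Finset α} (h : IsMonochromatic (blockwise b F k₀) S)
    (k : ι) : IsMonochromatic (F k) {s ∈ S | b s = k} := by
  obtain ⟨clr, hclr⟩ := h
  refine ⟨clr, fun i hi j hj hij => ?_⟩
  rw [mem_filter] at hi hj
  have := hclr i hi.1 j hj.1 hij
  rwa [blockwise, if_pos (hi.2.trans hj.2.symm), hi.2] at this

end Coloring

theorem choose_mul_two_lt_two_pow_choose_two {L : ℕ} (hL : 0 < L) :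
    (2 ^ L).choose (4 * L) * 2 < 2 ^ (4 * L).choose 2 := by
  have hchoose : (4 * L).choose 2 = 2 * L * (4 * L - 1) := by
    rw [Nat.choose_two_right]
    exact Nat.div_eq_of_eq_mul_left two_pos (by ring)
  calc (2 ^ L).choose (4 * L) * 2 ≤ (2 ^ L) ^ (4 * L) * 2 := by gcongr; exact Nat.choose_le_pow _ _
    _ = 2 ^ (L * (4 * L) + 1) := by ring
    _ < 2 ^ (4 * L).choose 2 := by
        rw [hchoose]
        apply Nat.pow_lt_pow_right one_lt_two
        zify [show 1 ≤ 4 * L by omega]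
        nlinarith

theorem exists_coloring_range_two_pow_two_pow (k : ℕ) :
    ∃ c : ℕ → ℕ → Fin 2,
      ∀ S ⊆ range (2 ^ 2 ^ (k + 1)), IsMonochromatic c S → #S < 2 ^ (k + 3) := by
  have h := choose_mul_two_lt_two_pow_choose_two (L := 2 ^ (k + 1)) (by positivity)
  rw [show 4 * 2 ^ (k + 1) = 2 ^ (k + 3) by ring] at h
  exact exists_coloring_forall_subset_isMonochromatic_card_lt _ (by simpa using h)

theorem two_pow_log_log_le_log {s : ℕ} (hs : 2 ≤ s) :
    2 ^ Nat.log 2 (Nat.log 2 s) ≤ Nat.log 2 s :=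
  Nat.pow_log_le_self 2 (Nat.log_pos one_lt_two hs).ne'

theorem lt_two_pow_two_pow_log_log_succ (s : ℕ) : s < 2 ^ 2 ^ (Nat.log 2 (Nat.log 2 s) + 1) :=
  (Nat.lt_pow_succ_log_self one_lt_two s).trans_le <|
    Nat.pow_le_pow_right two_pos (Nat.lt_pow_succ_log_self one_lt_two _)

theorem one_div_logb_rpow_le {ε : ℝ} (hε : 0 ≤ ε) {k s : ℕ} (hk : 2 ^ k ≤ Nat.log 2 s) :
    1 / logb 2 s ^ (1 + ε) ≤ ((2 : ℝ) ^ k)⁻¹ * ((2 : ℝ) ^ ε)⁻¹ ^ k := by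
  have h2k : (0 : ℝ) < 2 ^ k := by positivity
  have hlog : (2 : ℝ) ^ k ≤ logb 2 s :=
    le_trans (by exact_mod_cast hk) (natLog_le_logb s 2)
  calc 1 / logb 2 s ^ (1 + ε) ≤ 1 / ((2 : ℝ) ^ k) ^ (1 + ε) := by gcongr
    _ = ((2 : ℝ) ^ k)⁻¹ * ((2 : ℝ) ^ ε)⁻¹ ^ k := by
        rw [rpow_add h2k, rpow_one, ← rpow_pow_comm zero_le_two, inv_pow, one_div, mul_inv]

theorem sum_one_div_logb_rpow_le {ε : ℝ} (hε : 0 ≤ ε) {k : ℕ} {T : Finset ℕ}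
    (hT : ∀ s ∈ T, 2 ^ k ≤ Nat.log 2 s) (hcard : #T ≤ 2 ^ (k + 3)) :
    ∑ s ∈ T, 1 / logb 2 s ^ (1 + ε) ≤ 8 * ((2 : ℝ) ^ ε)⁻¹ ^ k :=
  calc ∑ s ∈ T, 1 / logb 2 s ^ (1 + ε) ≤ #T * (((2 : ℝ) ^ k)⁻¹ * ((2 : ℝ) ^ ε)⁻¹ ^ k) := by
        rw [← nsmul_eq_mul]
        exact sum_le_card_nsmul _ _ _ fun s hs => one_div_logb_rpow_le hε (hT s hs)
    _ ≤ 2 ^ (k + 3) * (((2 : ℝ) ^ k)⁻¹ * ((2 : ℝ) ^ ε)⁻¹ ^ k) := by gcongr; exact_mod_cast hcard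
    _ = 8 * ((2 : ℝ) ^ ε)⁻¹ ^ k := by field_simp; ring

/-- Section 6.2. For every `ε > 0` there is a constant `C > 0` such
that for every `n ≥ 2` there is a 2-coloring of the edges of the complete graph on
`{2, ..., n}` in which every monochromatic clique `S` satisfies
`∑_{s ∈ S} 1 / (log₂ s)^(1+ε) ≤ C`. -/
theorem weighted_ramsey_converges_for_power_weight (ε : ℝ) (hε : 0 < ε) :
    ∃ C : ℝ, 0 < C ∧ ∀ n : ℕ, 2 ≤ n →
      ∃ c : ℕ → ℕ → Fin 2,
        ∀ S : Finset ℕ, S ⊆ Finset.Icc 2 n →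
          (∃ clr : Fin 2, ∀ i ∈ S, ∀ j ∈ S, i < j → c i j = clr) →
          ∑ s ∈ S, 1 / (Real.logb 2 (s : ℝ)) ^ (1 + ε) ≤ C := by
  set r : ℝ := ((2 : ℝ) ^ ε)⁻¹
  have hr0 : 0 ≤ r := by positivity
  have hr1 : r < 1 := inv_lt_one_of_one_lt₀ (one_lt_rpow one_lt_two hε)
  refine ⟨8 * (1 - r)⁻¹, by have := sub_pos.2 hr1; positivity, fun n _ => ?_⟩
  choose F hF using exists_coloring_range_two_pow_two_pow
  set b : ℕ → ℕ := fun s => Nat.log 2 (Nat.log 2 s)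
  refine ⟨blockwise b F 0, fun S hS hmono => ?_⟩
  have hblock (k : ℕ) : ∑ s ∈ S with b s = k, 1 / logb 2 s ^ (1 + ε) ≤ 8 * r ^ k := by
    refine sum_one_div_logb_rpow_le hε.le (fun s hs => ?_) (hF k _ (fun s hs => ?_)
      (IsMonochromatic.filter_of_blockwise hmono k)).le <;> obtain ⟨hsS, rfl⟩ := mem_filter.1 hs
    · exact two_pow_log_log_le_log (mem_Icc.1 (hS hsS)).1
    · exact mem_range.2 (lt_two_pow_two_pow_log_log_succ s)
  calc ∑ s ∈ S, 1 / logb 2 s ^ (1 + ε)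
      = ∑ k ∈ S.image b, ∑ s ∈ S with b s = k, 1 / logb 2 s ^ (1 + ε) :=
        (sum_fiberwise_of_maps_to (fun s hs => mem_image_of_mem b hs) _).symm
    _ ≤ ∑ k ∈ S.image b, 8 * r ^ k := sum_le_sum fun k _ => hblock k
    _ ≤ 8 * (1 - r)⁻¹ := by
        rw [← mul_sum, ← tsum_geometric_of_lt_one hr0 hr1]
        gcongr
        exact (summable_geometric_of_lt_one hr0 hr1).sum_le_tsum _ fun k _ => pow_nonneg hr0 k
end
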